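/- There exist integers x ≥ 1 and y ≥ 1 such that (F(S₁)+d, y) ∈ AP_S and (x, F(S₂)+d) ∈ AP_S; consequently, setting N := ⌈(c₁+c₂)/d⌉, one has m(AP_S) ≥ ⌈N/2⌉ + 1 = ⌈(c₁+c₂)/(2d)⌉ + 1. -/

import Mathlib

open scoped BigOperators

namespace SumsetsCurve

/-- The `s`-fold sumset of `A = {a 0, …, a (n-1)}`:
all sums of `s` elements of `A` (with `0A = {0}`). -/
def sumset (n : ℕ) (a : ℕ → ℕ) (s : ℕ) : Set ℕ :=
  {x | ∃ f : Fin s → ℕ, (∀ i, f i < n) ∧ x = ∑ i, a (f i)}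

/-- The numerical semigroup (additive submonoid of ℕ) generated by `B`. -/
def numSG (B : Set ℕ) : Set ℕ := (AddSubmonoid.closure B : AddSubmonoid ℕ)

/-- `S₁`, the numerical semigroup generated by `A`. -/
def S1 (n : ℕ) (a : ℕ → ℕ) : Set ℕ := numSG {x | ∃ i < n, a i = x}

/-- `S₂`, the numerical semigroup generated by `d - A`. -/
def S2 (n d : ℕ) (a : ℕ → ℕ) : Set ℕ := numSG {x | ∃ i < n, d - a i = x}

/-- The conductor of `S ⊆ ℕ`: the least `c` with `c + ℕ ⊆ S`. -/
noncomputable def conductor (S : Set ℕ) : ℕ := sInf {c | ∀ m, c ≤ m → m ∈ S}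

/-- The genus of `S ⊆ ℕ`: the number of gaps `|ℕ \ S|`. -/
noncomputable def genus (S : Set ℕ) : ℕ := Set.ncard {x : ℕ | x ∉ S}

/-- `C = S ∩ [0, conductor S - 2]` (the inequality is taken in ℤ). -/
def Cpart (S : Set ℕ) : Set ℕ := {x | x ∈ S ∧ (x : ℤ) ≤ (conductor S : ℤ) - 2}

/-- The decomposition `sA = C₁ ⊔ [c₁, sd - c₂] ⊔ (sd - C₂)` of the Structure Theorem,
viewed inside ℤ. -/
def structDecomp (n d : ℕ) (a : ℕ → ℕ) (s : ℕ) : Prop :=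
  (Nat.cast '' sumset n a s : Set ℤ)
      = (Nat.cast '' Cpart (S1 n a))
        ∪ Set.Icc ((conductor (S1 n a) : ℤ)) ((s * d : ℤ) - (conductor (S2 n d a) : ℤ))
        ∪ ((fun c => (s * d : ℤ) - c) '' (Nat.cast '' Cpart (S2 n d a)))
    ∧ Disjoint (Nat.cast '' Cpart (S1 n a) : Set ℤ)
        (Set.Icc ((conductor (S1 n a) : ℤ)) ((s * d : ℤ) - (conductor (S2 n d a) : ℤ)))
    ∧ Disjoint (Nat.cast '' Cpart (S1 n a) : Set ℤ)
        ((fun c => (s * d : ℤ) - c) '' (Nat.cast '' Cpart (S2 n d a)))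
    ∧ Disjoint
        (Set.Icc ((conductor (S1 n a) : ℤ)) ((s * d : ℤ) - (conductor (S2 n d a) : ℤ)))
        ((fun c => (s * d : ℤ) - c) '' (Nat.cast '' Cpart (S2 n d a)))

/-- `σ(A)`: the least `σ` such that the Structure Theorem decomposition holds
for all `s ≥ σ`. -/
noncomputable def sigmaA (n d : ℕ) (a : ℕ → ℕ) : ℕ :=
  sInf {σ | ∀ s, σ ≤ s → structDecomp n d a s}

/-- `r(A)`: the least `r` such that `|sA| = sd + 1 - g₁ - g₂` for all `s ≥ r`
(the regularity of the Hilbert function of `k[C_A]`). -/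
noncomputable def rA (n d : ℕ) (a : ℕ → ℕ) : ℕ :=
  sInf {r | ∀ s, r ≤ s →
    ((sumset n a s).ncard : ℤ)
      = (s : ℤ) * d + 1 - genus (S1 n a) - genus (S2 n d a)}

/-- The homogeneous semigroup `S ⊆ ℕ²` generated by `{(a, d-a) : a ∈ A}`. -/
def SS (n d : ℕ) (a : ℕ → ℕ) : Set (ℕ × ℕ) :=
  (AddSubmonoid.closure {p : ℕ × ℕ | ∃ i < n, p = (a i, d - a i)} : AddSubmonoid (ℕ × ℕ))

/-- The Apery set `AP_S = {p ∈ S : p - (0,d) ∉ S, p - (d,0) ∉ S}`. -/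
def APS (n d : ℕ) (a : ℕ → ℕ) : Set (ℕ × ℕ) :=
  {p ∈ SS n d a |
    (¬ ∃ q ∈ SS n d a, q + (0, d) = p) ∧ (¬ ∃ q ∈ SS n d a, q + (d, 0) = p)}

/-- The exceptional set
`E_S = {p ∈ S : p - (0,d) ∈ S, p - (d,0) ∈ S, p - (d,d) ∉ S}`. -/
def ES (n d : ℕ) (a : ℕ → ℕ) : Set (ℕ × ℕ) :=
  {p ∈ SS n d a |
    (∃ q ∈ SS n d a, q + (0, d) = p) ∧ (∃ q ∈ SS n d a, q + (d, 0) = p) ∧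
      (¬ ∃ q ∈ SS n d a, q + (d, d) = p)}

/-- The level `L_s = {(x,y) ∈ ℕ² : x + y = sd}`. -/
def Lev (d s : ℕ) : Set (ℕ × ℕ) := {p | p.1 + p.2 = s * d}

/-- `AP_s = AP_S ∩ L_s`. -/
def APs (n d : ℕ) (a : ℕ → ℕ) (s : ℕ) : Set (ℕ × ℕ) := APS n d a ∩ Lev d s

/-- `E_s = E_S ∩ L_s`. -/
def Es (n d : ℕ) (a : ℕ → ℕ) (s : ℕ) : Set (ℕ × ℕ) := ES n d a ∩ Lev d s

/-- `m(AP_S) = max {s : AP_s ≠ ∅}`. -/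
noncomputable def mAP (n d : ℕ) (a : ℕ → ℕ) : ℕ := sSup {s | APs n d a s ≠ ∅}

/-- The Apery set of `S₁` with respect to `d`: `{x ∈ S₁ : x - d ∉ S₁}`. -/
def Ap1 (n d : ℕ) (a : ℕ → ℕ) : Set ℕ := {x ∈ S1 n a | ¬ ∃ y ∈ S1 n a, y + d = x}

/-- The Apery set of `S₂` with respect to `d`: `{x ∈ S₂ : x - d ∉ S₂}`. -/
def Ap2 (n d : ℕ) (a : ℕ → ℕ) : Set ℕ := {x ∈ S2 n d a | ¬ ∃ y ∈ S2 n d a, y + d = x}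

/-- `G`, the subgroup of ℤ² generated by `S`. -/
def G (n d : ℕ) (a : ℕ → ℕ) : AddSubgroup (ℤ × ℤ) :=
  AddSubgroup.closure {p | ∃ i < n, p = ((a i : ℤ), (d : ℤ) - (a i : ℤ))}

/-- `S₁` viewed inside ℤ. -/
def S1Z (n : ℕ) (a : ℕ → ℕ) : Set ℤ := Nat.cast '' S1 n a

/-- `S₂` viewed inside ℤ. -/
def S2Z (n d : ℕ) (a : ℕ → ℕ) : Set ℤ := Nat.cast '' S2 n d a

/-- `S' = G ∩ (S₁ × S₂)`. -/
def Sprime (n d : ℕ) (a : ℕ → ℕ) : Set (ℤ × ℤ) :=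
  {p | p ∈ G n d a ∧ p.1 ∈ S1Z n a ∧ p.2 ∈ S2Z n d a}

/-- The homogeneous semigroup `S` viewed inside ℤ². -/
def SZ (n d : ℕ) (a : ℕ → ℕ) : Set (ℤ × ℤ) :=
  (fun p : ℕ × ℕ => ((p.1 : ℤ), (p.2 : ℤ))) '' SS n d a

/-!
Write `c₁ - 1 + d ∈ S₁` as a sum of the least possible number `s` of elements of `A` and put
`y = s d - (c₁ - 1 + d)`. Then `(c₁ - 1 + d, y) ∈ S`; minimality of `s` forbids subtracting
`(0, d)`, while `c₁ - 1 ∉ S₁` forbids subtracting `(d, 0)` and forces `y ≥ 1`. The swap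
`(x, y) ↦ (y, x)` exchanges the semigroups of `A` and of `d - A`, which gives the second point.
Both points lie on levels `s` with `s d ≥ cᵢ + d`, so `2 d m(AP_S) ≥ c₁ + c₂ + 2d`.

Since `m(AP_S)` is an `sSup` in `ℕ` (which is `0` for an unbounded set), one also needs that
`AP_S` meets only finitely many levels: every `x ∈ S₁` is a sum of at most `x / d + c₁ + d`
elements of `A`, so a point `(x, y) ∈ AP_s` has `s d ≤ x + (c₁ + d) d`, and symmetrically
`s d ≤ y + (c₂ + d) d`.
-/

section Sumset

variable {n d : ℕ} {a : ℕ → ℕ} {s t x y : ℕ}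

lemma zero_mem_sumset_zero : 0 ∈ sumset n a 0 :=
  ⟨Fin.elim0, fun i => i.elim0, by simp⟩

lemma mem_sumset_one {i : ℕ} (hi : i < n) : a i ∈ sumset n a 1 :=
  ⟨fun _ => i, fun _ => hi, by simp⟩

lemma add_mem_sumset (hx : x ∈ sumset n a s) (hy : y ∈ sumset n a t) :
    x + y ∈ sumset n a (s + t) := by
  obtain ⟨f, hf, rfl⟩ := hx
  obtain ⟨g, hg, rfl⟩ := hy
  refine ⟨Fin.append f g, fun i => ?_, by simp [Fin.sum_univ_add]⟩
  cases i using Fin.addCases <;> simp [hf, hg]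

lemma exists_mem_sumset_le_of_mem_S1 (hx : x ∈ S1 n a) : ∃ l ≤ x, x ∈ sumset n a l := by
  induction hx using AddSubmonoid.closure_induction with
  | mem _ h =>
    obtain ⟨i, hi, rfl⟩ := h
    rcases Nat.eq_zero_or_pos (a i) with hai | hai
    · exact ⟨0, Nat.zero_le _, by rw [hai]; exact zero_mem_sumset_zero⟩
    · exact ⟨1, hai, mem_sumset_one hi⟩
  | zero => exact ⟨0, le_rfl, zero_mem_sumset_zero⟩
  | add x y _ _ hx hy =>
    obtain ⟨l, hl, hxl⟩ := hx
    obtain ⟨m, hm, hym⟩ := hy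
    exact ⟨l + m, by omega, add_mem_sumset hxl hym⟩

lemma sumset_mono (h0 : ∃ i < n, a i = 0) (hst : s ≤ t) : sumset n a s ⊆ sumset n a t := by
  obtain ⟨i, hi, hai⟩ := h0
  induction t, hst using Nat.le_induction with
  | base => exact le_rfl
  | succ t _ ih =>
    intro x hx
    simpa [hai] using add_mem_sumset (ih hx) (mem_sumset_one hi)

lemma le_mul_of_mem_sumset (hle : ∀ i < n, a i ≤ d) (hx : x ∈ sumset n a s) : x ≤ s * d := by
  obtain ⟨f, hf, rfl⟩ := hx
  simpa using Finset.sum_le_card_nsmul Finset.univ (fun i => a (f i)) d fun i _ => hle _ (hf i)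

lemma mul_mem_S1 (hd : ∃ i < n, a i = d) (k : ℕ) : k * d ∈ S1 n a := by
  obtain ⟨i, hi, hai⟩ := hd
  have hd : d ∈ AddSubmonoid.closure {x | ∃ i < n, a i = x} :=
    AddSubmonoid.subset_closure ⟨i, hi, hai⟩
  exact (by simpa using nsmul_mem hd k : k * d ∈ AddSubmonoid.closure _)

lemma exists_mem_sumset_mul_le {c : ℕ} (hd : ∃ i < n, a i = d) (hd0 : 0 < d)
    (hc : ∀ m, c ≤ m → m ∈ S1 n a) (hx : x ∈ S1 n a) :
    ∃ l, x ∈ sumset n a l ∧ l * d ≤ x + (c + d) * d := by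
  induction x using Nat.strong_induction_on with
  | _ x ih =>
    by_cases hxc : x < c + d
    · obtain ⟨l, hl, hxl⟩ := exists_mem_sumset_le_of_mem_S1 hx
      exact ⟨l, hxl, by nlinarith⟩
    · obtain ⟨i, hi, hai⟩ := hd
      obtain ⟨l, hxl, hl⟩ := ih (x - d) (by omega) (hc _ (by omega))
      refine ⟨l + 1, ?_, by rw [add_one_mul]; omega⟩
      simpa [hai, Nat.sub_add_cancel (show d ≤ x by omega)] using
        add_mem_sumset hxl (mem_sumset_one (a := a) hi)

end Sumset

section Conductor

variable {S : Set ℕ}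

lemma mem_of_conductor_le (hS : ∃ c, ∀ m, c ≤ m → m ∈ S) {m : ℕ} (hm : conductor S ≤ m) :
    m ∈ S :=
  Nat.sInf_mem hS m hm

lemma conductor_sub_one_notMem (hS : ∃ c, ∀ m, c ≤ m → m ∈ S) (hc : 0 < conductor S) :
    conductor S - 1 ∉ S := by
  intro hmem
  have : conductor S ≤ conductor S - 1 := Nat.sInf_le fun m hm => by
    rcases hm.eq_or_lt with rfl | hlt
    · exact hmem
    · exact mem_of_conductor_le hS (by omega)
  omega

lemma exists_forall_le_mem_S1 {n : ℕ} {a : ℕ → ℕ} (h : ∀ k, (∀ i < n, k ∣ a i) → k ∣ 1) :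
    ∃ c, ∀ m, c ≤ m → m ∈ S1 n a := by
  obtain ⟨c, hc⟩ := Nat.exists_mem_closure_of_ge {x | ∃ i < n, a i = x}
  have hgcd : Nat.setGcd {x | ∃ i < n, a i = x} = 1 :=
    Nat.dvd_one.1 (h _ fun i hi => Nat.setGcd_dvd_of_mem ⟨i, hi, rfl⟩)
  exact ⟨c, fun m hm => hc m hm (hgcd ▸ one_dvd m)⟩

end Conductor

section Homogeneous

variable {n d : ℕ} {a b : ℕ → ℕ} {s x y : ℕ}

lemma fst_mem_S1_of_mem_SS {p : ℕ × ℕ} (hp : p ∈ SS n d a) : p.1 ∈ S1 n a := by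
  induction hp using AddSubmonoid.closure_induction with
  | mem _ h =>
    obtain ⟨i, hi, rfl⟩ := h
    exact AddSubmonoid.subset_closure ⟨i, hi, rfl⟩
  | zero => exact zero_mem _
  | add p q _ _ hp hq => exact add_mem hp hq

lemma mem_SS_iff (hle : ∀ i < n, a i ≤ d) :
    (x, y) ∈ SS n d a ↔ ∃ s, x ∈ sumset n a s ∧ x + y = s * d := by
  constructor
  · intro h
    suffices ∀ p ∈ SS n d a, ∃ s, p.1 ∈ sumset n a s ∧ p.1 + p.2 = s * d from this _ h
    intro p hp
    induction hp using AddSubmonoid.closure_induction with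
    | mem _ h =>
      obtain ⟨i, hi, rfl⟩ := h
      exact ⟨1, mem_sumset_one hi, by have := hle i hi; simp; omega⟩
    | zero => exact ⟨0, zero_mem_sumset_zero, by simp⟩
    | add p q _ _ hp hq =>
      obtain ⟨s, hps, hp⟩ := hp
      obtain ⟨t, hqt, hq⟩ := hq
      exact ⟨s + t, add_mem_sumset hps hqt, by simp only [Prod.fst_add, Prod.snd_add]; lia⟩
  · rintro ⟨s, ⟨f, hf, rfl⟩, hxy⟩
    have hy : y = ∑ i, (d - a (f i)) := by
      have : ∑ i, (a (f i) + (d - a (f i))) = s * d := by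
        simp [Finset.sum_congr rfl fun i _ => Nat.add_sub_cancel' (hle _ (hf i))]
      rw [Finset.sum_add_distrib] at this
      omega
    have : (∑ i, a (f i), y) = ∑ i, (a (f i), d - a (f i)) := by
      ext <;> simp [Prod.fst_sum, Prod.snd_sum, hy]
    rw [this]
    exact sum_mem fun i _ => AddSubmonoid.subset_closure ⟨f i, hf i, rfl⟩

lemma exists_mem_SS_add_zero_d_eq_iff (hle : ∀ i < n, a i ≤ d) :
    (∃ q ∈ SS n d a, q + (0, d) = (x, y)) ↔ ∃ t, x ∈ sumset n a t ∧ x + y = (t + 1) * d := by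
  constructor
  · rintro ⟨⟨x', y'⟩, hq, hqp⟩
    obtain ⟨t, ht, hxy⟩ := (mem_SS_iff hle).1 hq
    simp only [Prod.mk_add_mk, add_zero, Prod.mk.injEq] at hqp
    obtain ⟨rfl, rfl⟩ := hqp
    exact ⟨t, ht, by rw [add_one_mul]; omega⟩
  · rintro ⟨t, ht, hxy⟩
    have := le_mul_of_mem_sumset hle ht
    refine ⟨(x, y - d), (mem_SS_iff hle).2 ⟨t, ht, ?_⟩, ?_⟩
    · rw [add_one_mul] at hxy
      omega
    · ext
      · simp
      · simp only [Prod.snd_add]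
        rw [add_one_mul] at hxy
        omega

lemma swap_mem_SS (hab : ∀ i < n, a i + b i = d) {p : ℕ × ℕ} (hp : p ∈ SS n d a) :
    p.swap ∈ SS n d b := by
  induction hp using AddSubmonoid.closure_induction with
  | mem _ h =>
    obtain ⟨i, hi, rfl⟩ := h
    have := hab i hi
    exact AddSubmonoid.subset_closure ⟨i, hi, by ext <;> simp <;> omega⟩
  | zero => exact zero_mem _
  | add p q _ _ hp hq => exact Prod.swap_add p q ▸ add_mem hp hq

lemma swap_mem_APs (hab : ∀ i < n, a i + b i = d) {p : ℕ × ℕ} (hp : p ∈ APs n d a s) :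
    p.swap ∈ APs n d b s := by
  have hba : ∀ i < n, b i + a i = d := fun i hi => (add_comm _ _).trans (hab i hi)
  obtain ⟨⟨hpS, hp₁, hp₂⟩, hlev⟩ := hp
  refine ⟨⟨swap_mem_SS hab hpS, ?_, ?_⟩, (add_comm _ _).trans hlev⟩
  · rintro ⟨q, hq, hqp⟩
    exact hp₂ ⟨q.swap, swap_mem_SS hba hq, by rw [← p.swap_swap, ← hqp]; rfl⟩
  · rintro ⟨q, hq, hqp⟩
    exact hp₁ ⟨q.swap, swap_mem_SS hba hq, by rw [← p.swap_swap, ← hqp]; rfl⟩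

lemma exists_mem_APs_conductor_add_sub_one (hle : ∀ i < n, a i ≤ d)
    (hd : ∃ i < n, a i = d) (hd2 : 2 ≤ d) (hS : ∃ c, ∀ m, c ≤ m → m ∈ S1 n a) :
    ∃ s y, 1 ≤ y ∧ (conductor (S1 n a) + d - 1, y) ∈ APs n d a s := by
  classical
  set c := conductor (S1 n a)
  have hex : ∃ s, c + d - 1 ∈ sumset n a s :=
    (exists_mem_sumset_le_of_mem_S1 (mem_of_conductor_le hS (by omega))).imp fun _ h => h.2
  set s := Nat.find hex
  have hs : c + d - 1 ∈ sumset n a s := Nat.find_spec hex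
  have hlt : c + d - 1 < s * d := by
    refine (le_mul_of_mem_sumset hle hs).lt_of_ne fun heq => ?_
    obtain hc | hc := Nat.eq_zero_or_pos c
    · obtain _ | s' := s <;> simp [hc, add_one_mul] at heq <;> omega
    · refine conductor_sub_one_notMem hS hc ?_
      have : c - 1 = (s - 1) * d := by rw [Nat.sub_one_mul]; omega
      exact this ▸ mul_mem_S1 hd _
  refine ⟨s, s * d - (c + d - 1), by omega, ⟨⟨(mem_SS_iff hle).2 ⟨s, hs, by omega⟩, ?_, ?_⟩, ?_⟩⟩
  · rw [exists_mem_SS_add_zero_d_eq_iff hle]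
    rintro ⟨t, ht, hlev⟩
    have hst : s * d ≤ t * d := Nat.mul_le_mul_right d (Nat.find_min' hex ht)
    rw [add_one_mul] at hlev
    omega
  · rintro ⟨q, hq, hqp⟩
    have h₁ : q.1 + d = c + d - 1 := congrArg Prod.fst hqp
    have hq₁ : c - 1 = q.1 := by omega
    exact conductor_sub_one_notMem hS (by omega) (hq₁ ▸ fst_mem_S1_of_mem_SS hq)
  · show c + d - 1 + (s * d - (c + d - 1)) = s * d
    omega

lemma mul_le_fst_add_of_mem_APs {c : ℕ} (hle : ∀ i < n, a i ≤ d) (h0 : ∃ i < n, a i = 0)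
    (hd : ∃ i < n, a i = d) (hd0 : 0 < d) (hc : ∀ m, c ≤ m → m ∈ S1 n a) {p : ℕ × ℕ}
    (hp : p ∈ APs n d a s) : s * d ≤ p.1 + (c + d) * d := by
  obtain ⟨⟨x, y⟩, ⟨⟨hpS, hp₁, -⟩, hlev⟩⟩ := p, hp
  obtain ⟨l, hl, hld⟩ := exists_mem_sumset_mul_le hd hd0 hc (fst_mem_S1_of_mem_SS hpS)
  refine le_trans (Nat.mul_le_mul_right d (not_lt.1 fun hls => hp₁ ?_)) hld
  rw [exists_mem_SS_add_zero_d_eq_iff hle]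
  exact ⟨s - 1, sumset_mono h0 (by omega) hl, by rw [Nat.sub_add_cancel (by omega)]; exact hlev⟩

lemma bddAbove_setOf_APs_ne_empty {c c' : ℕ} (hd0 : 0 < d) (hab : ∀ i < n, a i + b i = d)
    (ha0 : ∃ i < n, a i = 0) (hb0 : ∃ i < n, b i = 0)
    (hc : ∀ m, c ≤ m → m ∈ S1 n a) (hc' : ∀ m, c' ≤ m → m ∈ S1 n b) :
    BddAbove {s | APs n d a s ≠ ∅} := by
  have hba : ∀ i < n, b i + a i = d := fun i hi => (add_comm _ _).trans (hab i hi)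
  have hda : ∃ i < n, a i = d := hb0.imp fun i ⟨hi, h⟩ => ⟨hi, by have := hab i hi; omega⟩
  have hdb : ∃ i < n, b i = d := ha0.imp fun i ⟨hi, h⟩ => ⟨hi, by have := hab i hi; omega⟩
  refine ⟨c + d + (c' + d), fun s hs => ?_⟩
  obtain ⟨p, hp⟩ := Set.nonempty_iff_ne_empty.2 hs
  have h₁ := mul_le_fst_add_of_mem_APs (fun i hi => (hab i hi).symm ▸ Nat.le_add_right _ _)
    ha0 hda hd0 hc hp
  have h₂ := mul_le_fst_add_of_mem_APs (fun i hi => (hba i hi).symm ▸ Nat.le_add_right _ _)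
    hb0 hdb hd0 hc' (swap_mem_APs hab hp)
  have hlev : p.1 + p.2 = s * d := hp.2
  simp only [Prod.fst_swap] at h₂
  exact Nat.le_of_mul_le_mul_right (by rw [add_mul]; omega) hd0

end Homogeneous

section NormalForm

variable {n d k : ℕ} {a : ℕ → ℕ}

lemma two_le_of_strictMono (hn : 3 ≤ n) (ha0 : a 0 = 0) (had : a (n - 1) = d)
    (hmono : ∀ i j, i < j → j ≤ n - 1 → a i < a j) : 2 ≤ d := by
  have := hmono 0 1 (by omega) (by omega)
  have := hmono 1 (n - 1) (by omega) le_rfl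
  omega

lemma le_of_strictMono (had : a (n - 1) = d) (hmono : ∀ i j, i < j → j ≤ n - 1 → a i < a j) :
    ∀ i < n, a i ≤ d := fun i hi => by
  rcases (show i ≤ n - 1 by omega).eq_or_lt with rfl | hlt
  exacts [had.le, had ▸ (hmono i _ hlt le_rfl).le]

lemma dvd_of_forall_dvd_sub (hle : ∀ i < n, a i ≤ d) (h0 : ∃ i < n, a i = 0)
    (hk : ∀ i < n, k ∣ d - a i) : ∀ i < n, k ∣ a i := fun i hi => by
  obtain ⟨j, hj, haj⟩ := h0
  have hkd : k ∣ d := by simpa [haj] using hk j hj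
  simpa [Nat.sub_sub_self (hle i hi)] using Nat.dvd_sub hkd (hk i hi)

end NormalForm

lemma ceil_intCast_ceil_div_natCast {K : Type*} [Field K] [LinearOrder K]
    [IsStrictOrderedRing K] [FloorRing K] (q : K) (m : ℕ) :
    ⌈(⌈q⌉ : K) / m⌉ = ⌈q / m⌉ := by
  rw [← neg_neg ⌈(⌈q⌉ : K) / m⌉, ← neg_neg ⌈q / m⌉, ← Int.floor_neg, ← Int.floor_neg, ← neg_div,
    ← neg_div, ← Int.cast_neg, Int.floor_div_natCast, Int.floor_div_natCast, Int.floor_intCast,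
    Int.floor_neg]

lemma ceil_div_two_mul_add_one_le {c₁ c₂ d s₁ s₂ m : ℕ} (hd : 0 < d) (h₁ : c₁ + d ≤ s₁ * d)
    (h₂ : c₂ + d ≤ s₂ * d) (hs₁ : s₁ ≤ m) (hs₂ : s₂ ≤ m) :
    ⌈((c₁ : ℚ) + c₂) / (2 * d)⌉ + 1 ≤ m := by
  have hsum : c₁ + c₂ + 2 * d ≤ 2 * m * d := by nlinarith
  rw [← le_sub_iff_add_le, Int.ceil_le, div_le_iff₀ (by positivity)]
  have : ((c₁ + c₂ + 2 * d : ℕ) : ℚ) ≤ (2 * m * d : ℕ) := by exact_mod_cast hsum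
  push_cast at this ⊢
  linarith

/-- There exist `x, y ≥ 1` with `(F(S₁)+d, y) ∈ AP_S` and `(x, F(S₂)+d) ∈ AP_S`
(coordinates computed in ℤ, `F(Sᵢ) = cᵢ - 1`); consequently, with
`N := ⌈(c₁+c₂)/d⌉`, one has `m(AP_S) ≥ ⌈N/2⌉ + 1 = ⌈(c₁+c₂)/(2d)⌉ + 1`. -/
theorem mAP_lower_bound (n d : ℕ) (a : ℕ → ℕ)
    (hn : 4 ≤ n)
    (ha0 : a 0 = 0)
    (had : a (n - 1) = d)
    (hmono : ∀ i j, i < j → j ≤ n - 1 → a i < a j)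
    (hgcd : (Finset.Icc 1 (n - 1)).gcd a = 1) :
    (∃ x y : ℕ, 1 ≤ x ∧ 1 ≤ y
      ∧ (∃ p ∈ APS n d a,
          (p.1 : ℤ) = (conductor (S1 n a) : ℤ) - 1 + d ∧ p.2 = y)
      ∧ (∃ p ∈ APS n d a,
          p.1 = x ∧ (p.2 : ℤ) = (conductor (S2 n d a) : ℤ) - 1 + d))
    ∧ ⌈((⌈((conductor (S1 n a) : ℚ) + (conductor (S2 n d a) : ℚ)) / (d : ℚ)⌉ : ℚ)) / 2⌉ + 1
        ≤ (mAP n d a : ℤ)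
    ∧ ⌈((⌈((conductor (S1 n a) : ℚ) + (conductor (S2 n d a) : ℚ)) / (d : ℚ)⌉ : ℚ)) / 2⌉ + 1
        = ⌈((conductor (S1 n a) : ℚ) + (conductor (S2 n d a) : ℚ)) / (2 * (d : ℚ))⌉ + 1 := by
  have hd := two_le_of_strictMono (by omega) ha0 had hmono
  have hle := le_of_strictMono had hmono
  have ha0' : ∃ i < n, a i = 0 := ⟨0, by omega, ha0⟩
  have hgcd_a : ∀ k, (∀ i < n, k ∣ a i) → k ∣ 1 := fun k hk =>
    hgcd ▸ Finset.dvd_gcd fun i hi => hk i (by have := Finset.mem_Icc.1 hi; omega)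
  obtain ⟨c, hc⟩ := exists_forall_le_mem_S1 hgcd_a
  obtain ⟨c', hc'⟩ := exists_forall_le_mem_S1 (n := n) (a := fun i => d - a i)
    fun k hk => hgcd_a k (dvd_of_forall_dvd_sub hle ha0' hk)
  obtain ⟨s₁, y, hy, hp₁⟩ :=
    exists_mem_APs_conductor_add_sub_one hle ⟨n - 1, by omega, had⟩ hd ⟨c, hc⟩
  obtain ⟨s₂, x, hx, hp₂⟩ := exists_mem_APs_conductor_add_sub_one (a := fun i => d - a i)
    (fun i _ => Nat.sub_le d (a i)) ⟨0, by omega, by simp [ha0]⟩ hd ⟨c', hc'⟩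
  replace hp₂ : (x, conductor (S2 n d a) + d - 1) ∈ APs n d a s₂ :=
    swap_mem_APs (fun i hi => Nat.sub_add_cancel (hle i hi)) hp₂
  have hbdd := bddAbove_setOf_APs_ne_empty (by omega) (fun i hi => Nat.add_sub_cancel' (hle i hi))
    ha0' ⟨n - 1, by omega, by simp [had]⟩ hc hc'
  have hs₁ : s₁ ≤ mAP n d a := le_csSup hbdd (Set.nonempty_iff_ne_empty.1 ⟨_, hp₁⟩)
  have hs₂ : s₂ ≤ mAP n d a := le_csSup hbdd (Set.nonempty_iff_ne_empty.1 ⟨_, hp₂⟩)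
  have hlev₁ : _ = s₁ * d := hp₁.2
  have hlev₂ : _ = s₂ * d := hp₂.2
  have hceil : ⌈((⌈((conductor (S1 n a) : ℚ) + (conductor (S2 n d a) : ℚ)) / (d : ℚ)⌉ : ℚ)) / 2⌉
      = ⌈((conductor (S1 n a) : ℚ) + (conductor (S2 n d a) : ℚ)) / (2 * (d : ℚ))⌉ := by
    simpa [div_div, mul_comm] using ceil_intCast_ceil_div_natCast
      (((conductor (S1 n a) : ℚ) + (conductor (S2 n d a) : ℚ)) / (d : ℚ)) 2
  refine ⟨⟨x, y, hx, hy, ⟨_, hp₁.1, by push_cast; omega, rfl⟩,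
    ⟨_, hp₂.1, rfl, by push_cast; omega⟩⟩, hceil ▸ ?_, by rw [hceil]⟩
  exact ceil_div_two_mul_add_one_le (by omega) (by omega) (by omega) hs₁ hs₂

end SumsetsCurve
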